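/- arXiv:1308.5923 — 4 statements merged into one kernel-verified Lean document; each statement's English description precedes it below -/
import Mathlib

section
/- Let n = 2^k with k ≥ 1, and let s_k be the optimal magnitude sequence defined by s_1 = [2^{k-1}], s_{j+1} = s_j ++ [2^{k-1-j}] ++ s_j. For every function d : Fin (2^k - 1) → {+1, -1} (Derek's choice of directions), the set of partial sums {0} ∪ {Σ_{i<t} d(i)·s_k(i) mod 2^k : t = 1, ..., 2^k - 1} equals all of Z/2^k Z. In other words, regardless of the signs chosen, the token visits all n positions. -/
/-!
By induction on `j ≤ k`, the signed partial sums of `magSeq k j` reach every multiple of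
`2 ^ (k - j)` modulo `2 ^ k`; the case `j = k` is the theorem. Every entry of `magSeq k j` is a
multiple of `2 ^ (k - j)`, and `magSeq k (j + 1) = s ++ [2 ^ (k - 1 - j)] ++ s` with
`s = magSeq k j`. An even multiple of `2 ^ (k - j - 1)` is reached inside the first copy of `s`.
For an odd one, the first copy together with the middle step lands on an odd multiple of
`2 ^ (k - j - 1)`, whatever the signs were, and the difference to the target is an even multiple,
reached inside the second copy.
-/

/-- The doubling magnitude sequence for the Magnus-Derek game on `2^k` nodes. -/
def magSeq (k : ℕ) : ℕ → List ℕ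
  | 0 => []
  | 1 => [2 ^ (k - 1)]
  | j + 2 => magSeq k (j + 1) ++ [2 ^ (k - 1 - (j + 1))] ++ magSeq k (j + 1)

open Finset

section GetD

variable {α M : Type*} [AddCommMonoid M] (f : ℕ → α → M) (a : α)

theorem sum_range_getD_append_of_le {l₁ : List α} (l₂ : List α) {t : ℕ}
    (ht : t ≤ l₁.length) :
    ∑ i ∈ range t, f i ((l₁ ++ l₂).getD i a) = ∑ i ∈ range t, f i (l₁.getD i a) :=
  sum_congr rfl fun i hi => by
    rw [List.getD_append _ _ _ _ (lt_of_lt_of_le (mem_range.1 hi) ht)]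

theorem sum_range_getD_append (l₁ l₂ : List α) (t : ℕ) :
    ∑ i ∈ range (l₁.length + t), f i ((l₁ ++ l₂).getD i a) =
      ∑ i ∈ range l₁.length, f i (l₁.getD i a) +
        ∑ i ∈ range t, f (l₁.length + i) (l₂.getD i a) := by
  rw [sum_range_add, sum_range_getD_append_of_le f a l₂ le_rfl]
  congr 1
  refine sum_congr rfl fun i _ => ?_
  rw [List.getD_append_right _ _ _ _ (Nat.le_add_right _ _), Nat.add_sub_cancel_left]

theorem List.getD_of_forall_mem {p : α → Prop} {l : List α} (hl : ∀ x ∈ l, p x) (ha : p a) (i : ℕ) :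
    p (l.getD i a) := by
  rcases lt_or_ge i l.length with h | h
  · rw [List.getD_eq_getElem _ _ h]
    exact hl _ (List.getElem_mem h)
  · rwa [List.getD_eq_default _ _ h]

end GetD

namespace MagnusDerek

theorem magSeq_succ (k j : ℕ) :
    magSeq k (j + 1) = magSeq k j ++ [2 ^ (k - 1 - j)] ++ magSeq k j := by
  cases j <;> simp [magSeq]

theorem length_magSeq (k j : ℕ) : (magSeq k j).length = 2 ^ j - 1 := by
  induction j with
  | zero => rfl
  | succ j ih =>
    have : 1 ≤ 2 ^ j := Nat.one_le_two_pow
    simp only [magSeq_succ, List.length_append, ih, List.length_singleton, pow_succ]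
    omega

theorem pow_dvd_of_mem_magSeq {k j : ℕ} (hj : j ≤ k) : ∀ x ∈ magSeq k j, 2 ^ (k - j) ∣ x := by
  induction j with
  | zero => simp [magSeq]
  | succ j ih =>
    have hdvd : 2 ^ (k - (j + 1)) ∣ 2 ^ (k - j) := pow_dvd_pow 2 (by omega)
    intro x hx
    simp only [magSeq_succ, List.mem_append, List.mem_singleton] at hx
    rcases hx with (hx | rfl) | hx
    · exact hdvd.trans (ih (by omega) x hx)
    · exact pow_dvd_pow 2 (by omega)
    · exact hdvd.trans (ih (by omega) x hx)

theorem pow_dvd_getD_magSeq {k j : ℕ} (hj : j ≤ k) (i : ℕ) :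
    (2 : ℤ) ^ (k - j) ∣ ((magSeq k j).getD i 0 : ℤ) := by
  exact_mod_cast List.getD_of_forall_mem 0 (pow_dvd_of_mem_magSeq hj) (dvd_zero _) i

theorem exists_sum_magSeq_modEq {k j : ℕ} (hj : j ≤ k) (d : ℕ → ℤ)
    (hd : ∀ i, d i = 1 ∨ d i = -1) (m : ℤ) :
    ∃ t ≤ 2 ^ j - 1,
      ∑ i ∈ range t, d i * ((magSeq k j).getD i 0 : ℤ) ≡ m * 2 ^ (k - j) [ZMOD 2 ^ k] := by
  induction j generalizing d m with
  | zero => exact ⟨0, le_rfl, by simp [Int.modEq_iff_dvd]⟩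
  | succ j ih =>
    rw [magSeq_succ]
    set s := magSeq k j
    set u : ℤ := 2 ^ (k - (j + 1))
    have hu : (2 : ℤ) ^ (k - j) = 2 * u := by
      rw [← pow_succ']; congr 1; omega
    have hmid : (2 : ℤ) ^ (k - 1 - j) = u := by congr 1; omega
    have hlen : s.length = 2 ^ j - 1 := length_magSeq k j
    have hpow : 2 ^ (j + 1) - 1 = s.length + 1 + (2 ^ j - 1) := by
      have : 1 ≤ 2 ^ j := Nat.one_le_two_pow
      rw [hlen, pow_succ]
      omega
    let f : ℕ → ℕ → ℤ := fun i x => d i * x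
    rcases Int.even_or_odd' m with ⟨m₁, rfl | rfl⟩
    · obtain ⟨t, ht, hsum⟩ := ih (by omega) d hd m₁
      refine ⟨t, by omega, ?_⟩
      rw [sum_range_getD_append_of_le f 0 s (l₁ := s ++ _)
          (by simp only [List.length_append, List.length_singleton]; omega),
        sum_range_getD_append_of_le f 0 _ (by omega)]
      convert hsum using 1
      rw [hu]; ring
    · obtain ⟨q, hq⟩ : 2 * u ∣ ∑ i ∈ range s.length, f i (s.getD i 0) :=
        hu ▸ dvd_sum fun i _ => dvd_mul_of_dvd_right (pow_dvd_getD_magSeq (by omega) i) _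
      -- the signed middle step `± u` turns the odd target into an even one
      obtain ⟨r, hr⟩ : Even (2 * m₁ + 1 - d s.length) := by
        rcases hd s.length with h | h <;> rw [h] <;> [exact ⟨m₁, by ring⟩; exact ⟨m₁ + 1, by ring⟩]
      obtain ⟨t, ht, hsum⟩ := ih (by omega) (fun i => d (s.length + 1 + i)) (fun i => hd _) (r - q)
      refine ⟨s.length + 1 + t, by omega, ?_⟩
      have hsplit := sum_range_getD_append f 0 (s ++ [2 ^ (k - 1 - j)]) s t
      have hfirst := sum_range_getD_append f 0 s [2 ^ (k - 1 - j)] 1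
      simp only [List.length_append, List.length_singleton] at hsplit
      simp only [f, sum_range_one, add_zero, List.getD_cons_zero] at hsplit hfirst hq
      rw [hsplit, hfirst, hq]
      calc _ ≡ _ [ZMOD 2 ^ k] := Int.ModEq.add_left _ hsum
        _ = (2 * m₁ + 1) * u := by
          push_cast
          rw [hmid, hu]
          linear_combination -u * hr

end MagnusDerek

theorem stmt_1_general (k : ℕ) (d : ℕ → ℤ) (hd : ∀ i, d i = 1 ∨ d i = -1) :
    ∀ x : ZMod (2 ^ k), ∃ t ≤ 2 ^ k - 1,
      ((∑ i ∈ Finset.range t, d i * ((magSeq k k).getD i 0) : ℤ) : ZMod (2 ^ k)) = x := by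
  intro x
  obtain ⟨m, rfl⟩ := ZMod.intCast_surjective x
  obtain ⟨t, ht, hsum⟩ := MagnusDerek.exists_sum_magSeq_modEq le_rfl d hd m
  refine ⟨t, ht, (ZMod.intCast_eq_intCast_iff _ _ _).2 ?_⟩
  simpa using hsum

/-- Regardless of the sign sequence `d` chosen by Derek, the partial sums of
`d i * (magSeq k k) i` modulo `2^k` (over `t = 0, …, 2^k - 1` steps) cover all
of `ZMod (2^k)`: the token visits all `n = 2^k` positions. -/
theorem stmt_1 (k : ℕ) (hk : 1 ≤ k) (d : ℕ → ℤ) (hd : ∀ i, d i = 1 ∨ d i = -1) :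
    ∀ x : ZMod (2 ^ k), ∃ t ≤ 2 ^ k - 1,
      ((∑ i ∈ Finset.range t, d i * ((magSeq k k).getD i 0) : ℤ) : ZMod (2 ^ k)) = x :=
  stmt_1_general k d hd
end

section
/- Let n ≥ 3 and let R ⊆ Z/nZ be a set of at least 2 'restricted' positions, and suppose R has three cyclically consecutive elements a, b, c such that the cyclic gaps b−a and c−b are not equal. Then there exists a position x ∉ R and a magnitude m with 1 ≤ m ≤ n/2 such that both x + m ∈ R and x − m ∈ R (mod n). Consequently, any set of restricted positions that Derek can protect must have all cyclic gaps equal, i.e., must be of the form R = x_0 + pZ_{n/p} for some divisor p of n. -/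
lemma magnus_part1 (n : ℕ) (hn : 3 ≤ n)
    (R : Set (ZMod n)) (a b c : ZMod n) (g₁ g₂ : ℕ)
    (ha : a ∈ R) (hb : b ∈ R) (hc : c ∈ R)
    (hg₁ : 0 < g₁) (hg₂ : 0 < g₂) (hsum : g₁ + g₂ ≤ n)
    (hbe : b = a + (g₁ : ZMod n)) (hce : c = b + (g₂ : ZMod n))
    (hbet₁ : ∀ j : ℕ, 0 < j → j < g₁ → a + (j : ZMod n) ∉ R)
    (hbet₂ : ∀ j : ℕ, 0 < j → j < g₂ → b + (j : ZMod n) ∉ R)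
    (hne : g₁ ≠ g₂) :
    ∃ x : ZMod n, x ∉ R ∧ ∃ m : ℕ, 1 ≤ m ∧ m ≤ n / 2 ∧
      x + (m : ZMod n) ∈ R ∧ x - (m : ZMod n) ∈ R := by
  rcases Nat.even_or_odd (g₁ + g₂) with ⟨m, hm⟩ | hodd
  · -- m + m = g₁ + g₂
    have hm1 : 1 ≤ m := by omega
    have hmn : m ≤ n / 2 := by omega
    have hmg : m ≠ g₁ := by omega
    refine ⟨a + (m : ZMod n), ?_, m, hm1, hmn, ?_, ?_⟩
    · rcases lt_or_gt_of_ne hmg with h | h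
      · exact hbet₁ m hm1 h
      · have hx : a + (m : ZMod n) = b + ((m - g₁ : ℕ) : ZMod n) := by
          rw [hbe]
          have : (m : ZMod n) = (g₁ : ZMod n) + ((m - g₁ : ℕ) : ZMod n) := by
            rw [← Nat.cast_add]
            congr 1
            omega
          rw [this, add_assoc]
        rw [hx]
        exact hbet₂ (m - g₁) (by omega) (by omega)
    · have : a + (m : ZMod n) + (m : ZMod n) = c := by
        rw [hce, hbe, add_assoc, add_assoc, ← Nat.cast_add, ← Nat.cast_add]
        congr 2
        omega
      rw [this]; exact hc
    · rw [add_sub_cancel_right]; exact ha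
  · rcases Nat.even_or_odd g₁ with ⟨m, hm⟩ | hodd₁
    · have hm1 : 1 ≤ m := by omega
      have hmn : m ≤ n / 2 := by omega
      refine ⟨a + (m : ZMod n), hbet₁ m hm1 (by omega), m, hm1, hmn, ?_, ?_⟩
      · have : a + (m : ZMod n) + (m : ZMod n) = b := by
          rw [hbe, add_assoc, ← Nat.cast_add]
          congr 2
          omega
        rw [this]; exact hb
      · rw [add_sub_cancel_right]; exact ha
    · have hev : Even g₂ := by
        rcases Nat.even_or_odd g₂ with h | h
        · exact h
        · exact absurd (hodd₁.add_odd h) (Nat.not_even_iff_odd.mpr hodd)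
      obtain ⟨m, hm⟩ := hev
      have hm1 : 1 ≤ m := by omega
      have hmn : m ≤ n / 2 := by omega
      refine ⟨b + (m : ZMod n), hbet₂ m hm1 (by omega), m, hm1, hmn, ?_, ?_⟩
      · have : b + (m : ZMod n) + (m : ZMod n) = c := by
          rw [hce, add_assoc, ← Nat.cast_add]
          congr 2
          omega
        rw [this]; exact hc
      · rw [add_sub_cancel_right]; exact hb


theorem magnus_part2 (n : ℕ) (hn : 3 ≤ n)
    (part1 : ∀ R : Set (ZMod n), ∀ a b c : ZMod n, ∀ g₁ g₂ : ℕ,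
      a ∈ R → b ∈ R → c ∈ R →
      0 < g₁ → 0 < g₂ → g₁ + g₂ ≤ n →
      b = a + (g₁ : ZMod n) → c = b + (g₂ : ZMod n) →
      (∀ j : ℕ, 0 < j → j < g₁ → a + (j : ZMod n) ∉ R) →
      (∀ j : ℕ, 0 < j → j < g₂ → b + (j : ZMod n) ∉ R) →
      g₁ ≠ g₂ →
      ∃ x : ZMod n, x ∉ R ∧ ∃ m : ℕ, 1 ≤ m ∧ m ≤ n / 2 ∧
        x + (m : ZMod n) ∈ R ∧ x - (m : ZMod n) ∈ R) :
    (∀ R : Set (ZMod n), R.Nonempty →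
      (∀ x : ZMod n, x ∉ R → ∀ m : ℕ, 1 ≤ m → m ≤ n / 2 →
        (x + (m : ZMod n) ∉ R ∨ x - (m : ZMod n) ∉ R)) →
      ∃ p : ℕ, 0 < p ∧ p ∣ n ∧ ∃ x₀ : ZMod n,
        R = {y : ZMod n | ∃ k : ℕ, k < n / p ∧ y = x₀ + (k * p : ℕ)}) := by
  classical
  have npos : 0 < n := by omega
  haveI : NeZero n := ⟨by omega⟩
  rintro R ⟨a, ha⟩ H
  have castn : ((n : ℕ) : ZMod n) = 0 := ZMod.natCast_self n
  by_cases hsing : ∀ y ∈ R, y = a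
  · refine ⟨n, npos, dvd_refl n, a, ?_⟩
    ext y
    simp only [Set.mem_setOf_eq]
    constructor
    · intro hy
      exact ⟨0, by simp [Nat.div_self npos], by simp [hsing y hy]⟩
    · rintro ⟨k, hk, rfl⟩
      have hk0 : k = 0 := by
        rw [Nat.div_self npos] at hk; omega
      simpa [hk0] using ha
  · push_neg at hsing
    obtain ⟨b0, hb0, hb0ne⟩ := hsing
    have ex : ∀ y : ZMod n, y ∈ R → ∃ d : ℕ, 0 < d ∧ y + (d : ZMod n) ∈ R := by
      intro y hy
      exact ⟨n, npos, by simp [castn, hy]⟩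
    set G : ZMod n → ℕ := fun y => if h : y ∈ R then Nat.find (ex y h) else 0 with hG
    have Gpos : ∀ y ∈ R, 0 < G y := by
      intro y hy
      simp only [hG, dif_pos hy]
      exact (Nat.find_spec (ex y hy)).1
    have Gmem : ∀ y ∈ R, y + (G y : ZMod n) ∈ R := by
      intro y hy
      simp only [hG, dif_pos hy]
      exact (Nat.find_spec (ex y hy)).2
    have Gmin : ∀ y ∈ R, ∀ j : ℕ, 0 < j → j < G y → y + (j : ZMod n) ∉ R := by
      intro y hy j hj hjg
      simp only [hG, dif_pos hy] at hjg
      have := Nat.find_min (ex y hy) hjg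
      tauto
    have Gmin' : ∀ y ∈ R, ∀ j : ℕ, 0 < j → y + (j : ZMod n) ∈ R → G y ≤ j := by
      intro y hy j hj hjR
      simp only [hG, dif_pos hy]
      exact Nat.find_min' (ex y hy) ⟨hj, hjR⟩
    have Glt : ∀ y ∈ R, G y < n := by
      intro y hy
      have hz : ∃ z ∈ R, z ≠ y := by
        by_cases hya : y = a
        · exact ⟨b0, hb0, by rw [hya]; exact hb0ne⟩
        · exact ⟨a, ha, fun h => hya h.symm⟩
      obtain ⟨z, hzR, hzy⟩ := hz
      have hd0 : 0 < (z - y).val := by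
        rw [ZMod.val_pos]
        exact sub_ne_zero.mpr hzy
      have hdz : y + (((z - y).val : ℕ) : ZMod n) ∈ R := by
        rw [ZMod.natCast_val, ZMod.cast_id]
        simpa using hzR
      have h1 : G y ≤ (z - y).val := Gmin' y hy _ hd0 hdz
      have h2 : (z - y).val < n := ZMod.val_lt _
      omega
    -- equal gaps
    have equal : ∀ y ∈ R, G (y + (G y : ZMod n)) = G y := by
      intro y hy
      set z := y + (G y : ZMod n) with hzdef
      have hz : z ∈ R := Gmem y hy
      have hsum : G y + G z ≤ n := by
        have hGlt := Glt y hy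
        have hyback : z + ((n - G y : ℕ) : ZMod n) = y := by
          rw [hzdef, add_assoc, ← Nat.cast_add]
          have : G y + (n - G y) = n := by omega
          rw [this, castn, add_zero]
        have : G z ≤ n - G y := by
          apply Gmin' z hz _ (by omega)
          rw [hyback]; exact hy
        omega
      by_contra hne
      have hne' : G y ≠ G z := fun h => hne (by rw [hzdef, ← h])
      obtain ⟨x, hx, m, hm1, hm2, hp, hmn⟩ :=
        part1 R y z (z + (G z : ZMod n)) (G y) (G z) hy hz (Gmem z hz)
          (Gpos y hy) (Gpos z hz) hsum rfl rfl (Gmin y hy) (Gmin z hz) hne'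
      rcases H x hx m hm1 hm2 with h | h
      · exact h hp
      · exact h hmn
    set g := G a with hg
    have gpos : 0 < g := Gpos a ha
    have chain : ∀ k : ℕ, a + ((k * g : ℕ) : ZMod n) ∈ R ∧
        G (a + ((k * g : ℕ) : ZMod n)) = g := by
      intro k
      induction k with
      | zero =>
        have h0 : a + ((0 * g : ℕ) : ZMod n) = a := by norm_num
        rw [h0]
        exact ⟨ha, hg.symm⟩
      | succ k ih =>
        obtain ⟨hw, hGw⟩ := ih
        have hstep : a + (((k + 1) * g : ℕ) : ZMod n) =
            (a + ((k * g : ℕ) : ZMod n)) + (g : ZMod n) := by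
          rw [add_assoc, ← Nat.cast_add]
          congr 2
          ring
        constructor
        · rw [hstep]
          have := Gmem _ hw
          rwa [hGw] at this
        · rw [hstep]
          have := equal _ hw
          rwa [hGw] at this
    have hdvd : g ∣ n := by
      rcases Nat.eq_zero_or_pos (n % g) with h | h
      · exact Nat.dvd_of_mod_eq_zero h
      exfalso
      obtain ⟨hw, hGw⟩ := chain (n / g)
      have hmod : (n / g) * g + n % g = n := Nat.div_add_mod' n g
      have : (a + ((n / g * g : ℕ) : ZMod n)) + ((n % g : ℕ) : ZMod n) = a := by
        rw [add_assoc, ← Nat.cast_add, hmod, castn, add_zero]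
      refine Gmin _ hw (n % g) h ?_ ?_
      · rw [hGw]; exact Nat.mod_lt _ gpos
      · rw [this]; exact ha
    refine ⟨g, gpos, hdvd, a, ?_⟩
    ext y
    simp only [Set.mem_setOf_eq]
    constructor
    · intro hy
      set t := (y - a).val with ht
      have hyt : y = a + (t : ZMod n) := by
        rw [ht, ZMod.natCast_val, ZMod.cast_id]
        ring
      have htn : t < n := ZMod.val_lt _
      have hs : t % g = 0 := by
        by_contra hs
        obtain ⟨hw, hGw⟩ := chain (t / g)
        have hmod : (t / g) * g + t % g = t := Nat.div_add_mod' t g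
        have hwy : (a + ((t / g * g : ℕ) : ZMod n)) + ((t % g : ℕ) : ZMod n) = y := by
          rw [add_assoc, ← Nat.cast_add, hmod, ← hyt]
        refine Gmin _ hw (t % g) (Nat.pos_of_ne_zero hs) ?_ ?_
        · rw [hGw]; exact Nat.mod_lt _ gpos
        · rw [hwy]; exact hy
      refine ⟨t / g, ?_, ?_⟩
      · have h1 : (t / g) * g = t := Nat.div_mul_cancel (Nat.dvd_of_mod_eq_zero hs)
        have h2 : (n / g) * g = n := Nat.div_mul_cancel hdvd
        have := htn
        rcases Nat.lt_or_ge (t / g) (n / g) with h | h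
        · exact h
        · exfalso
          have : n ≤ t := by
            calc n = (n / g) * g := h2.symm
            _ ≤ (t / g) * g := Nat.mul_le_mul_right g h
            _ = t := h1
          omega
      · rw [hyt]
        congr 2
        exact (Nat.div_mul_cancel (Nat.dvd_of_mod_eq_zero hs)).symm
    · rintro ⟨k, hk, rfl⟩
      exact (chain k).1


/-- (1) If a set `R` of restricted positions on the cycle `Z/nZ` has three
cyclically consecutive elements `a, b, c` with unequal cyclic gaps, then there
is a non-restricted position `x` and a magnitude `1 ≤ m ≤ n/2` such that both
`x + m` and `x - m` are restricted (so Magnus can force a visit to `R`).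
(2) Consequently, any nonempty protectable set of restricted positions has all
cyclic gaps equal, i.e. is a coset `x₀ + p·Z_{n/p}` for some divisor `p` of `n`. -/
theorem stmt_4 (n : ℕ) (hn : 3 ≤ n) :
    (∀ R : Set (ZMod n), ∀ a b c : ZMod n, ∀ g₁ g₂ : ℕ,
      a ∈ R → b ∈ R → c ∈ R →
      0 < g₁ → 0 < g₂ → g₁ + g₂ ≤ n →
      b = a + (g₁ : ZMod n) → c = b + (g₂ : ZMod n) →
      (∀ j : ℕ, 0 < j → j < g₁ → a + (j : ZMod n) ∉ R) →
      (∀ j : ℕ, 0 < j → j < g₂ → b + (j : ZMod n) ∉ R) →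
      g₁ ≠ g₂ →
      ∃ x : ZMod n, x ∉ R ∧ ∃ m : ℕ, 1 ≤ m ∧ m ≤ n / 2 ∧
        x + (m : ZMod n) ∈ R ∧ x - (m : ZMod n) ∈ R) ∧
    (∀ R : Set (ZMod n), R.Nonempty →
      (∀ x : ZMod n, x ∉ R → ∀ m : ℕ, 1 ≤ m → m ≤ n / 2 →
        (x + (m : ZMod n) ∉ R ∨ x - (m : ZMod n) ∉ R)) →
      ∃ p : ℕ, 0 < p ∧ p ∣ n ∧ ∃ x₀ : ZMod n,
        R = {y : ZMod n | ∃ k : ℕ, k < n / p ∧ y = x₀ + (k * p : ℕ)}) := by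
  exact ⟨magnus_part1 n hn, magnus_part2 n hn (magnus_part1 n hn)⟩
end

section
/- Let n = 2^k. Suppose Magnus plays the classical optimal magnitude sequence s_k of length n−1 and Derek plays any sequence of unitaries D_i ∈ SU(2) on the direction register (no position control). Then for every position x ∈ Z/nZ there exists a step t ≤ n−1 and a computational-basis component of the joint state at step t with nonzero amplitude whose position register equals x. In other words, every position is attained. -/
open scoped BigOperators

/-- The joint state (direction register ⊗ position register) of the walk with
classical magnitudes `s` where Derek applies the unitary `D t` to his direction
register at step `t`, followed by the conditional shift by `± s t`. -/
noncomputable def derekWalk (n : ℕ) (s : ℕ → ZMod n)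
    (D : ℕ → Matrix (Fin 2) (Fin 2) ℂ) : ℕ → Fin 2 × ZMod n → ℂ
  | 0 => fun p => if p = (0, 0) then 1 else 0
  | t + 1 => fun p => ∑ d : Fin 2,
      D t p.1 d * derekWalk n s D t (d, p.2 - (if p.1 = 0 then s t else - s t))

/-!
Magnus's sequence for `2 ^ (k + 1)` is twice the sequence for `2 ^ k`, then a step of size one,
then twice the sequence for `2 ^ k` again. Steps of even size preserve the parity coset of the
position, and on the coset of `x` the walk is the walk on `ZMod (2 ^ k)` with the halved
magnitudes. So if the state has weight on the coset of `x`, the first half reaches `x` by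
induction; otherwise all its weight sits on the other coset, and since a unitary coin never
annihilates a nonzero state, the middle step of size one moves some weight onto the coset of `x`,
from where the second half reaches `x`. This is why the induction runs over arbitrary nonzero
initial states.
-/

open scoped Matrix

theorem Matrix.mulVec_ne_zero_of_mem_unitaryGroup {ι K : Type*} [Fintype ι] [DecidableEq ι]
    [Field K] [StarRing K] (U : Matrix ι ι K) (hU : U ∈ Matrix.unitaryGroup ι K) {v : ι → K}
    (hv : v ≠ 0) :
    U *ᵥ v ≠ 0 := by
  rw [← Matrix.mulVec_zero U]
  exact (Matrix.mulVec_injective_iff_isUnit.mpr (Unitary.isUnit_coe (U := ⟨U, hU⟩))).ne hv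

noncomputable def walkStep (n : ℕ) (a : ZMod n) (U : Matrix (Fin 2) (Fin 2) ℂ)
    (ψ : Fin 2 × ZMod n → ℂ) : Fin 2 × ZMod n → ℂ :=
  fun p => ∑ d : Fin 2, U p.1 d * ψ (d, p.2 - (if p.1 = 0 then a else -a))

noncomputable def walkFrom (n : ℕ) (s : ℕ → ZMod n) (D : ℕ → Matrix (Fin 2) (Fin 2) ℂ)
    (ψ : Fin 2 × ZMod n → ℂ) : ℕ → Fin 2 × ZMod n → ℂ
  | 0 => ψ
  | t + 1 => walkStep n (s t) (D t) (walkFrom n s D ψ t)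

section Walk

variable {n : ℕ} (s : ℕ → ZMod n) (D : ℕ → Matrix (Fin 2) (Fin 2) ℂ)

theorem derekWalk_eq_walkFrom (t : ℕ) :
    derekWalk n s D t = walkFrom n s D (fun p => if p = (0, 0) then 1 else 0) t := by
  induction t with
  | zero => rfl
  | succ t ih => funext p; simp [derekWalk, walkFrom, walkStep, ih]

theorem walkStep_apply_add (a : ZMod n) (U : Matrix (Fin 2) (Fin 2) ℂ)
    (ψ : Fin 2 × ZMod n → ℂ) (r : Fin 2) (z : ZMod n) :
    walkStep n a U ψ (r, z + if r = 0 then a else -a) = (U *ᵥ fun d => ψ (d, z)) r := by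
  simp [walkStep, Matrix.mulVec, dotProduct]

theorem walkStep_ne_zero {a : ZMod n} {U : Matrix (Fin 2) (Fin 2) ℂ}
    (hU : U ∈ Matrix.unitaryGroup (Fin 2) ℂ) {ψ : Fin 2 × ZMod n → ℂ} (hψ : ψ ≠ 0) :
    walkStep n a U ψ ≠ 0 := by
  obtain ⟨⟨d, z⟩, hdz⟩ := Function.ne_iff.mp hψ
  have hv : (fun d => ψ (d, z)) ≠ 0 := fun h => hdz (congrFun h d)
  obtain ⟨r, hr⟩ := Function.ne_iff.mp (U.mulVec_ne_zero_of_mem_unitaryGroup hU hv)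
  intro h
  exact hr (by rw [← walkStep_apply_add, h]; rfl)

theorem walkFrom_ne_zero (hD : ∀ t, D t ∈ Matrix.unitaryGroup (Fin 2) ℂ)
    {ψ : Fin 2 × ZMod n → ℂ} (hψ : ψ ≠ 0) (t : ℕ) : walkFrom n s D ψ t ≠ 0 := by
  induction t with
  | zero => exact hψ
  | succ t ih => exact walkStep_ne_zero (hD t) ih

theorem walkFrom_zero_state (t : ℕ) : walkFrom n s D 0 t = 0 := by
  induction t with
  | zero => rfl
  | succ t ih => funext p; simp [walkFrom, walkStep, ih]

theorem walkFrom_add (ψ : Fin 2 × ZMod n → ℂ) (a t : ℕ) :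
    walkFrom n s D ψ (a + t) =
      walkFrom n (fun i => s (a + i)) (fun i => D (a + i)) (walkFrom n s D ψ a) t := by
  induction t with
  | zero => rfl
  | succ t ih => rw [← add_assoc, walkFrom, ih]; rfl

end Walk

def doubleHom (M : ℕ) : ZMod M →+ ZMod (2 * M) :=
  ZMod.lift M ⟨2 • Int.castAddHom (ZMod (2 * M)), by
    simpa [two_mul] using ZMod.natCast_self (2 * M)⟩

section Coset

variable {M : ℕ}

theorem doubleHom_intCast (m : ℤ) : doubleHom M m = 2 * m := by
  simp [doubleHom, ZMod.lift_coe, two_mul]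

theorem doubleHom_natCast (m : ℕ) : doubleHom M m = (2 * m : ℕ) := by
  simpa using doubleHom_intCast (M := M) m

theorem doubleHom_one : doubleHom M 1 = 2 := by
  simpa using doubleHom_intCast (M := M) 1

theorem exists_eq_doubleHom_or_eq_doubleHom_add_one (z : ZMod (2 * M)) :
    ∃ w, z = doubleHom M w ∨ z = doubleHom M w + 1 := by
  obtain ⟨m, rfl⟩ := ZMod.intCast_surjective z
  refine ⟨(m / 2 : ℤ), ?_⟩
  have hm : (m : ZMod (2 * M)) = 2 * (m / 2 : ℤ) + (m % 2 : ℤ) := by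
    exact_mod_cast congrArg Int.cast (Int.mul_ediv_add_emod m 2).symm
  rw [doubleHom_intCast, hm]
  rcases Int.emod_two_eq m with h | h <;> simp [h]

def restrictCoset (M : ℕ) (c : ZMod (2 * M)) (φ : Fin 2 × ZMod (2 * M) → ℂ) :
    Fin 2 × ZMod M → ℂ :=
  fun p => φ (p.1, doubleHom M p.2 + c)

theorem restrictCoset_walkStep (c : ZMod (2 * M)) (a : ZMod M) (U : Matrix (Fin 2) (Fin 2) ℂ)
    (φ : Fin 2 × ZMod (2 * M) → ℂ) :
    restrictCoset M c (walkStep (2 * M) (doubleHom M a) U φ) =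
      walkStep M a U (restrictCoset M c φ) := by
  funext ⟨d, y⟩
  by_cases hd : d = 0 <;> simp [restrictCoset, walkStep, hd, sub_add_eq_add_sub, add_right_comm]

theorem restrictCoset_walkFrom (c : ZMod (2 * M)) {s : ℕ → ZMod (2 * M)} {σ : ℕ → ZMod M}
    (D : ℕ → Matrix (Fin 2) (Fin 2) ℂ) (φ : Fin 2 × ZMod (2 * M) → ℂ) {t : ℕ}
    (hs : ∀ i < t, s i = doubleHom M (σ i)) :
    restrictCoset M c (walkFrom (2 * M) s D φ t) = walkFrom M σ D (restrictCoset M c φ) t := by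
  induction t with
  | zero => rfl
  | succ t ih =>
    rw [walkFrom, walkFrom, hs t t.lt_succ_self, restrictCoset_walkStep,
      ih fun i hi => hs i (hi.trans t.lt_succ_self)]

theorem restrictCoset_walkStep_one_ne_zero {c : ZMod (2 * M)} {U : Matrix (Fin 2) (Fin 2) ℂ}
    (hU : U ∈ Matrix.unitaryGroup (Fin 2) ℂ) {φ : Fin 2 × ZMod (2 * M) → ℂ} (hφ : φ ≠ 0)
    (hφc : restrictCoset M c φ = 0) : restrictCoset M c (walkStep (2 * M) 1 U φ) ≠ 0 := by
  obtain ⟨⟨d, z⟩, hdz⟩ := Function.ne_iff.mp hφ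
  obtain ⟨w, hw | hw⟩ := exists_eq_doubleHom_or_eq_doubleHom_add_one (z - c)
  · exact absurd (congrFun hφc (d, w)) (by simpa [restrictCoset, ← hw] using hdz)
  have hv : (fun d => φ (d, z)) ≠ 0 := fun h => hdz (congrFun h d)
  obtain ⟨r, hr⟩ := Function.ne_iff.mp (U.mulVec_ne_zero_of_mem_unitaryGroup hU hv)
  have hz : z + (if r = 0 then 1 else -1) = doubleHom M (if r = 0 then w + 1 else w) + c := by
    rw [sub_eq_iff_eq_add.mp hw]
    split_ifs
    · rw [map_add, doubleHom_one]; ring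
    · ring
  intro h
  have h' := congrFun h (r, if r = 0 then w + 1 else w)
  rw [restrictCoset, ← hz, walkStep_apply_add] at h'
  exact hr h'

end Coset

def AttainsAllPositions (n : ℕ) (L : List ℕ) : Prop :=
  ∀ s : ℕ → ZMod n, (∀ i < L.length, s i = L.getD i 0) →
    ∀ D : ℕ → Matrix (Fin 2) (Fin 2) ℂ, (∀ t, D t ∈ Matrix.unitaryGroup (Fin 2) ℂ) →
    ∀ ψ : Fin 2 × ZMod n → ℂ, ψ ≠ 0 →
    ∀ x : ZMod n, ∃ t ≤ L.length, ∃ d : Fin 2, walkFrom n s D ψ t (d, x) ≠ 0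

namespace AttainsAllPositions

theorem of_one (L : List ℕ) : AttainsAllPositions 1 L := by
  intro s _ D _ ψ hψ x
  obtain ⟨⟨d, z⟩, hdz⟩ := Function.ne_iff.mp hψ
  exact ⟨0, Nat.zero_le _, d, by rwa [Subsingleton.elim x z]⟩

variable {M : ℕ} {L : List ℕ}

theorem exists_of_restrictCoset_ne_zero (h : AttainsAllPositions M L) {s : ℕ → ZMod (2 * M)}
    (hs : ∀ i < L.length, s i = (2 * L.getD i 0 : ℕ))
    {D : ℕ → Matrix (Fin 2) (Fin 2) ℂ} (hD : ∀ t, D t ∈ Matrix.unitaryGroup (Fin 2) ℂ)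
    {φ : Fin 2 × ZMod (2 * M) → ℂ} {x : ZMod (2 * M)} (hφ : restrictCoset M x φ ≠ 0) :
    ∃ t ≤ L.length, ∃ d : Fin 2, walkFrom (2 * M) s D φ t (d, x) ≠ 0 := by
  obtain ⟨t, ht, d, hd⟩ := h (fun i => (L.getD i 0 : ℕ)) (fun _ _ => rfl) D hD _ hφ 0
  refine ⟨t, ht, d, ?_⟩
  rw [← restrictCoset_walkFrom x (s := s) D φ fun i hi => by
    rw [hs i (by omega), doubleHom_natCast]] at hd
  simpa [restrictCoset] using hd

theorem double (h : AttainsAllPositions M L) :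
    AttainsAllPositions (2 * M) (L.map (2 * ·) ++ [1] ++ L.map (2 * ·)) := by
  intro s hs D hD ψ hψ x
  simp only [List.length_append, List.length_map, List.length_singleton] at hs ⊢
  have hfirst : ∀ i < L.length, s i = (2 * L.getD i 0 : ℕ) := fun i hi => by
    rw [hs i (by omega)]
    simp [List.getD_eq_getElem?_getD, List.getElem?_append_left, hi]
  have hmid : s L.length = 1 := by
    rw [hs _ (by omega)]
    simp [List.getD_eq_getElem?_getD]
  have hsecond : ∀ i < L.length, s (L.length + 1 + i) = (2 * L.getD i 0 : ℕ) := fun i hi => by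
    rw [hs _ (by omega), List.getD_append_right _ _ _ _ (by simp)]
    cases hLi : L[i]? <;> simp [List.getD_eq_getElem?_getD, hLi]
  by_cases hψx : restrictCoset M x ψ = 0
  · set φ := walkFrom (2 * M) s D ψ L.length
    have hφx : restrictCoset M x φ = 0 := by
      rw [restrictCoset_walkFrom x D ψ fun i hi => by rw [hfirst i hi, doubleHom_natCast], hψx,
        walkFrom_zero_state]
    have hφ'x : restrictCoset M x (walkFrom (2 * M) s D ψ (L.length + 1)) ≠ 0 := by
      rw [walkFrom, hmid]
      exact restrictCoset_walkStep_one_ne_zero (hD _) (walkFrom_ne_zero s D hD hψ _) hφx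
    obtain ⟨t, ht, d, hd⟩ := h.exists_of_restrictCoset_ne_zero hsecond (fun _ => hD _) hφ'x
    exact ⟨L.length + 1 + t, by omega, d, by rwa [walkFrom_add]⟩
  · obtain ⟨t, ht, d, hd⟩ := h.exists_of_restrictCoset_ne_zero hfirst hD hψx
    exact ⟨t, by omega, d, hd⟩

end AttainsAllPositions

theorem magSeq_succ_eq_map (k : ℕ) : ∀ j ≤ k, magSeq (k + 1) j = (magSeq k j).map (2 * ·)
  | 0, _ => rfl
  | 1, hk => by
    simp only [magSeq, List.map_cons, List.map_nil, Nat.add_sub_cancel, ← pow_succ']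
    congr; omega
  | j + 2, hj => by
    simp only [magSeq, magSeq_succ_eq_map k (j + 1) (by omega), List.map_append, List.map_cons,
      List.map_nil, ← pow_succ']
    congr 4; omega

theorem magSeq_succ_self (k : ℕ) :
    magSeq (k + 1) (k + 1) =
      (magSeq k k).map (2 * ·) ++ [1] ++ (magSeq k k).map (2 * ·) := by
  rw [← magSeq_succ_eq_map k k le_rfl]
  cases k with
  | zero => rfl
  | succ k => simp [magSeq]

theorem magSeq_self_length (k : ℕ) : (magSeq k k).length = 2 ^ k - 1 := by
  induction k with
  | zero => rfl
  | succ k ih =>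
    rw [magSeq_succ_self]
    simp only [List.length_append, List.length_map, List.length_singleton, ih, pow_succ]
    have := k.one_le_two_pow
    omega

theorem attainsAllPositions_magSeq (k : ℕ) : AttainsAllPositions (2 ^ k) (magSeq k k) := by
  induction k with
  | zero => exact AttainsAllPositions.of_one _
  | succ k ih => rw [magSeq_succ_self, pow_succ']; exact ih.double

theorem stmt_9_general (k n : ℕ) (hn : n = 2 ^ k)
    (D : ℕ → Matrix (Fin 2) (Fin 2) ℂ)
    (hD : ∀ t, D t ∈ Matrix.unitaryGroup (Fin 2) ℂ ∧ (D t).det = 1) :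
    ∀ x : ZMod n, ∃ t ≤ n - 1, ∃ d : Fin 2,
      derekWalk n (fun i => (((magSeq k k).getD i 0 : ℕ) : ZMod n)) D t (d, x) ≠ 0 := by
  subst hn
  intro x
  have hψ : (fun p : Fin 2 × ZMod (2 ^ k) => if p = (0, 0) then (1 : ℂ) else 0) ≠ 0 :=
    Function.ne_iff.mpr ⟨(0, 0), by simp⟩
  obtain ⟨t, ht, d, hd⟩ :=
    attainsAllPositions_magSeq k _ (fun _ _ => rfl) D (fun t => (hD t).1) _ hψ x
  exact ⟨t, magSeq_self_length k ▸ ht, d, by rwa [derekWalk_eq_walkFrom]⟩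

/-- If Magnus plays the classical optimal doubling sequence `s_k` on `n = 2^k`
nodes and Derek plays arbitrary `SU(2)` unitaries on his direction register,
then every position `x` is attained: at some step `t ≤ n - 1` some
computational-basis component with position `x` has nonzero amplitude. -/
theorem stmt_9 (k n : ℕ) (hk : 1 ≤ k) (hn : n = 2 ^ k)
    (D : ℕ → Matrix (Fin 2) (Fin 2) ℂ)
    (hD : ∀ t, D t ∈ Matrix.unitaryGroup (Fin 2) ℂ ∧ (D t).det = 1) :
    ∀ x : ZMod n, ∃ t ≤ n - 1, ∃ d : Fin 2,
      derekWalk n (fun i => (((magSeq k k).getD i 0 : ℕ) : ZMod n)) D t (d, x) ≠ 0 :=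
  stmt_9_general k n hn D hD
end

section
/- With R_p = pZ_{n/p} ⊆ Z/nZ and the symmetry relation as defined (equal distance to nearest restricted position in the indicated direction), the relation is invariant under the step operator: if (x, d_x) and (y, d_y) are symmetric and magnitude m is applied, then (x + d_x·m, d_x) and (y + d_y·m, d_y) are again symmetric. -/
/-! The positions of `R_p` are exactly the kernel of the reduction `ZMod n → ZMod p`. Reducing
mod `p`, the walk `j ↦ x + d_x (m + j)` hits `R_p` exactly when `m + j ≡ δ`, because
`x + d_x δ ≡ 0` and `d_x = ±1` is a unit; the same holds for `y`. So after the step both walks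
meet `R_p` at the same times, and the first such time is the common new distance. -/

namespace ZMod

theorem exists_lt_div_mul_eq_iff_castHom_eq_zero {n p : ℕ} [NeZero n] (hpn : p ∣ n)
    (z : ZMod n) :
    (∃ k : ℕ, k < n / p ∧ z = ((k * p : ℕ) : ZMod n)) ↔ castHom hpn (ZMod p) z = 0 := by
  constructor
  · rintro ⟨k, -, rfl⟩
    rw [map_natCast, Nat.cast_mul, natCast_self, mul_zero]
  · intro hz
    have hdvd : p ∣ z.val := by
      rwa [← natCast_eq_zero_iff, natCast_val, ← castHom_apply (h := hpn)]
    refine ⟨z.val / p, Nat.div_lt_div_of_lt_of_dvd hpn z.val_lt, ?_⟩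
    rw [Nat.div_mul_cancel hdvd, natCast_zmod_val]

end ZMod

theorem RingHom.map_add_mul_add_mul_eq_zero_iff {A B : Type*} [CommRing A] [CommRing B]
    (φ : A →+* B) {x : A} {d : ℤ} (hd : IsUnit d) {δ : ℕ} (hx : φ (x + d * δ) = 0)
    (m j : ℕ) : φ ((x + d * m) + d * j) = 0 ↔ ((m + j : ℕ) : B) = δ := by
  have hφ : φ ((x + d * m) + d * j) = d * (((m + j : ℕ) : B) - δ) := by
    rw [← sub_zero (φ _), ← hx]
    simp only [map_add, map_mul, map_intCast, map_natCast, Nat.cast_add]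
    ring
  have hd' : IsUnit (d : B) := hd.map (Int.castRingHom B)
  rw [hφ, hd'.mul_right_eq_zero, sub_eq_zero]

theorem stmt_11_general (n p : ℕ) (hpn : p ∣ n)
    (R : Set (ZMod n)) (hR : R = {z : ZMod n | ∃ k : ℕ, k < n / p ∧ z = (k * p : ℕ)})
    (x y : ZMod n) (dx dy : ℤ) (hdx : dx = 1 ∨ dx = -1) (hdy : dy = 1 ∨ dy = -1)
    (δ : ℕ)
    (hxδ : x + (dx : ZMod n) * (δ : ZMod n) ∈ R)
    (hyδ : y + (dy : ZMod n) * (δ : ZMod n) ∈ R)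
    (m : ℕ) :
    ∃ δ' : ℕ,
      (x + (dx : ZMod n) * (m : ZMod n)) + (dx : ZMod n) * (δ' : ZMod n) ∈ R ∧
      (∀ j : ℕ, j < δ' → (x + (dx : ZMod n) * (m : ZMod n)) + (dx : ZMod n) * (j : ZMod n) ∉ R) ∧
      (y + (dy : ZMod n) * (m : ZMod n)) + (dy : ZMod n) * (δ' : ZMod n) ∈ R ∧
      (∀ j : ℕ, j < δ' → (y + (dy : ZMod n) * (m : ZMod n)) + (dy : ZMod n) * (j : ZMod n) ∉ R) := by
  have hn : n ≠ 0 := by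
    rintro rfl
    obtain ⟨k, hk, -⟩ := hR ▸ hxδ
    simp at hk
  have : NeZero n := ⟨hn⟩
  have : NeZero p := ⟨ne_zero_of_dvd_ne_zero hn hpn⟩
  have hmem (z : ZMod n) : z ∈ R ↔ ZMod.castHom hpn (ZMod p) z = 0 :=
    hR ▸ ZMod.exists_lt_div_mul_eq_iff_castHom_eq_zero hpn z
  have hx := (ZMod.castHom hpn (ZMod p)).map_add_mul_add_mul_eq_zero_iff
    (Int.isUnit_iff.mpr hdx) ((hmem _).mp hxδ) m
  have hy := (ZMod.castHom hpn (ZMod p)).map_add_mul_add_mul_eq_zero_iff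
    (Int.isUnit_iff.mpr hdy) ((hmem _).mp hyδ) m
  have hex : ∃ j : ℕ, ((m + j : ℕ) : ZMod p) = δ :=
    ⟨((δ : ZMod p) - m).val, by simp⟩
  simp only [hmem, hx, hy]
  exact ⟨Nat.find hex, Nat.find_spec hex, fun _ => Nat.find_min hex,
    Nat.find_spec hex, fun _ => Nat.find_min hex⟩

/-- The symmetry relation (equal cyclic distance to the nearest element of
`R_p = pZ_{n/p}` in the indicated direction) is invariant under the step
operator: if `(x, d_x)` and `(y, d_y)` are symmetric and a magnitude `m` is
applied, then `(x + d_x·m, d_x)` and `(y + d_y·m, d_y)` are again symmetric. -/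
theorem stmt_11 (n p : ℕ) (hn : 3 ≤ n) (hp : 0 < p) (hpn : p ∣ n)
    (R : Set (ZMod n)) (hR : R = {z : ZMod n | ∃ k : ℕ, k < n / p ∧ z = (k * p : ℕ)})
    (x y : ZMod n) (dx dy : ℤ) (hdx : dx = 1 ∨ dx = -1) (hdy : dy = 1 ∨ dy = -1)
    (δ : ℕ)
    (hxδ : x + (dx : ZMod n) * (δ : ZMod n) ∈ R)
    (hxmin : ∀ j : ℕ, j < δ → x + (dx : ZMod n) * (j : ZMod n) ∉ R)
    (hyδ : y + (dy : ZMod n) * (δ : ZMod n) ∈ R)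
    (hymin : ∀ j : ℕ, j < δ → y + (dy : ZMod n) * (j : ZMod n) ∉ R)
    (m : ℕ) :
    ∃ δ' : ℕ,
      (x + (dx : ZMod n) * (m : ZMod n)) + (dx : ZMod n) * (δ' : ZMod n) ∈ R ∧
      (∀ j : ℕ, j < δ' → (x + (dx : ZMod n) * (m : ZMod n)) + (dx : ZMod n) * (j : ZMod n) ∉ R) ∧
      (y + (dy : ZMod n) * (m : ZMod n)) + (dy : ZMod n) * (δ' : ZMod n) ∈ R ∧
      (∀ j : ℕ, j < δ' → (y + (dy : ZMod n) * (m : ZMod n)) + (dy : ZMod n) * (j : ZMod n) ∉ R) :=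
  stmt_11_general n p hpn R hR x y dx dy hdx hdy δ hxδ hyδ m
end
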